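/- Let n ≥ 1, μ > 2, let δ > 0 be the unique positive root of μ log(1+δ) = 2δ, and let u₀, u₁ ∈ L¹(ℝⁿ). For ξ with |ξ| > δ write r := |ξ| and b(r) := √(r² - (μ²/4) log²(1+r)) (positive since μ log(1+r) < 2r for r > δ), and define w(t,ξ) := (1+r)^{-μt/2} [ cos(b(r)t)·û₀(ξ) + (μ log(1+r)/(2b(r)))·sin(b(r)t)·û₀(ξ) + (1/b(r))·sin(b(r)t)·û₁(ξ) ]. Then there exist constants C > 0 (depending on n and μ), β > 0 and t₀ > 0 such that for all t ≥ t₀: ∫_{|ξ| > δ} |w(t,ξ)|² dξ ≤ C (‖u₀‖₁² + ‖u₁‖₁²) e^{-βt}. -/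

import Mathlib

/-!
On `‖ξ‖ > δ` the bracket in `w` is at most `(1 + μ)(1 + t)(1 + ‖ξ‖)(‖u₀‖₁ + ‖u₁‖₁)`: the two
terms divided by `b` are controlled through `|sin (b t)| ≤ b t`, so no lower bound on `b`
(which tends to `0` as `‖ξ‖ ↓ δ`) is needed. With `μ t₀ = n + 3`, the damping factor splits as
`(1 + ‖ξ‖)^{2 - μ t} = (1 + ‖ξ‖)^{-μ(t - t₀)} (1 + ‖ξ‖)^{-(n + 1)}`; the first factor is at most
`(1 + δ)^{-μ(t - t₀)} = e^{-2δ(t - t₀)}` because `μ log (1 + δ) = 2δ`, and the second is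
integrable on `ℝⁿ`. Halving the rate absorbs the factor `(1 + t)²`, so `β = δ` works.
-/

open MeasureTheory

/-- The Fourier transform `f̂(ξ) = ∫ e^{-i x·ξ} f(x) dx`. -/
noncomputable def fourierTransformCLM' {n : ℕ} (f : EuclideanSpace ℝ (Fin n) → ℂ)
    (ξ : EuclideanSpace ℝ (Fin n)) : ℂ :=
  ∫ x, Complex.exp (-(Complex.I * ((inner ℝ x ξ : ℝ) : ℂ))) * f x

open Real

lemma norm_fourierTransformCLM'_le {n : ℕ} (u : EuclideanSpace ℝ (Fin n) → ℂ)
    (ξ : EuclideanSpace ℝ (Fin n)) : ‖fourierTransformCLM' u ξ‖ ≤ ∫ x, ‖u x‖ := by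
  refine (norm_integral_le_integral_norm _).trans_eq (integral_congr_ae ?_)
  filter_upwards with x
  simp [Complex.norm_exp]

lemma div_mul_abs_sin_mul_le {c b t : ℝ} (hc : 0 ≤ c) (hb : 0 ≤ b) (ht : 0 ≤ t) :
    c / b * |sin (b * t)| ≤ c * t := by
  rcases hb.eq_or_lt with rfl | hb
  · simpa using mul_nonneg hc ht
  calc c / b * |sin (b * t)| ≤ c / b * (b * t) := by
        gcongr
        simpa [abs_of_nonneg (mul_nonneg hb.le ht)] using abs_sin_le_abs (x := b * t)
    _ = c * t := by field_simp

lemma norm_wave_multiplier_le {b ℓ t : ℝ} (hb : 0 ≤ b) (hℓ : 0 ≤ ℓ) (ht : 0 ≤ t) (a₀ a₁ : ℂ) :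
    ‖((cos (b * t) : ℝ) : ℂ) * a₀ + ((ℓ / (2 * b) : ℝ) : ℂ) * ((sin (b * t) : ℝ) : ℂ) * a₀ +
        ((1 / b : ℝ) : ℂ) * ((sin (b * t) : ℝ) : ℂ) * a₁‖ ≤
      (1 + ℓ / 2 * t) * ‖a₀‖ + t * ‖a₁‖ := by
  have hcos : ‖((cos (b * t) : ℝ) : ℂ)‖ ≤ 1 := by
    rw [Complex.norm_real, Real.norm_eq_abs]
    exact abs_cos_le_one _
  have hsin₀ : ‖((ℓ / (2 * b) : ℝ) : ℂ) * ((sin (b * t) : ℝ) : ℂ)‖ ≤ ℓ / 2 * t := by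
    rw [norm_mul, Complex.norm_real, Complex.norm_real, Real.norm_eq_abs, Real.norm_eq_abs,
      abs_of_nonneg (by positivity : 0 ≤ ℓ / (2 * b)), ← div_div]
    exact div_mul_abs_sin_mul_le (by positivity) hb ht
  have hsin₁ : ‖((1 / b : ℝ) : ℂ) * ((sin (b * t) : ℝ) : ℂ)‖ ≤ t := by
    rw [norm_mul, Complex.norm_real, Complex.norm_real, Real.norm_eq_abs, Real.norm_eq_abs,
      abs_of_nonneg (by positivity : 0 ≤ 1 / b)]
    simpa using div_mul_abs_sin_mul_le zero_le_one hb ht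
  calc _ ≤ ‖((cos (b * t) : ℝ) : ℂ)‖ * ‖a₀‖
          + ‖((ℓ / (2 * b) : ℝ) : ℂ) * ((sin (b * t) : ℝ) : ℂ)‖ * ‖a₀‖
          + ‖((1 / b : ℝ) : ℂ) * ((sin (b * t) : ℝ) : ℂ)‖ * ‖a₁‖ := by
        simpa only [← norm_mul] using norm_add₃_le
    _ ≤ 1 * ‖a₀‖ + ℓ / 2 * t * ‖a₀‖ + t * ‖a₁‖ := by gcongr
    _ = _ := by ring

lemma norm_sq_damped_wave_le {μ t r b A B : ℝ} (hμ : 0 ≤ μ) (ht : 0 ≤ t) (hr : 0 ≤ r)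
    (hb : 0 ≤ b) {a₀ a₁ : ℂ} (ha₀ : ‖a₀‖ ≤ A) (ha₁ : ‖a₁‖ ≤ B) :
    ‖(((1 + r) ^ (-(μ * t) / 2) : ℝ) : ℂ) *
        (((cos (b * t) : ℝ) : ℂ) * a₀ +
          ((μ * log (1 + r) / (2 * b) : ℝ) : ℂ) * ((sin (b * t) : ℝ) : ℂ) * a₀ +
          ((1 / b : ℝ) : ℂ) * ((sin (b * t) : ℝ) : ℂ) * a₁)‖ ^ 2 ≤
      ((1 + μ) * (1 + t) * (A + B)) ^ 2 * (1 + r) ^ (2 - μ * t) := by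
  have hr1 : 0 < 1 + r := by linarith
  have hlog₀ : 0 ≤ log (1 + r) := log_nonneg (by linarith)
  have hlog : log (1 + r) ≤ 1 + r := (log_le_sub_one_of_pos hr1).trans (by linarith)
  have hK₀ : 1 + μ * log (1 + r) / 2 * t ≤ (1 + μ) * (1 + t) * (1 + r) := by
    nlinarith [mul_le_mul_of_nonneg_left hlog (mul_nonneg hμ ht), mul_nonneg hμ ht,
      mul_nonneg hμ hr, mul_nonneg (mul_nonneg hμ ht) hr]
  have hK₁ : t ≤ (1 + μ) * (1 + t) * (1 + r) := by
    nlinarith [mul_nonneg hμ ht, mul_nonneg hμ hr, mul_nonneg (mul_nonneg hμ ht) hr,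
      mul_nonneg ht hr]
  have hwave := calc
    _ ≤ (1 + μ * log (1 + r) / 2 * t) * ‖a₀‖ + t * ‖a₁‖ :=
        norm_wave_multiplier_le hb (by positivity) ht a₀ a₁
    _ ≤ (1 + μ) * (1 + t) * (1 + r) * A + (1 + μ) * (1 + t) * (1 + r) * B := by
        gcongr
    _ = (1 + μ) * (1 + t) * (A + B) * (1 + r) := by ring
  have hsplit : (1 + r) ^ (2 - μ * t) = ((1 + r) ^ (-(μ * t) / 2)) ^ 2 * (1 + r) ^ 2 := by
    rw [← rpow_natCast, ← rpow_natCast, ← rpow_mul hr1.le, ← rpow_add hr1]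
    congr 1
    push_cast
    ring
  rw [norm_mul, Complex.norm_real, norm_of_nonneg (by positivity), hsplit]
  calc _ = ((1 + r) ^ (-(μ * t) / 2)) ^ 2 * ‖_‖ ^ 2 := by ring
    _ ≤ ((1 + r) ^ (-(μ * t) / 2)) ^ 2 * ((1 + μ) * (1 + t) * (A + B) * (1 + r)) ^ 2 := by
        gcongr
    _ = _ := by ring

lemma one_add_rpow_neg_mul_le_exp {μ δ r s : ℝ} (hδ : 0 < δ)
    (hroot : μ * log (1 + δ) = 2 * δ) (hr : δ ≤ r) (hμs : 0 ≤ μ * s) :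
    (1 + r) ^ (-(μ * s)) ≤ exp (-(2 * δ * s)) := by
  calc (1 + r) ^ (-(μ * s)) ≤ (1 + δ) ^ (-(μ * s)) :=
        rpow_le_rpow_of_nonpos (by linarith) (by linarith) (by linarith)
    _ = exp (-(2 * δ * s)) := by
        rw [rpow_def_of_pos (by linarith)]
        congr 1
        linear_combination -s * hroot

lemma sq_le_mul_exp {δ x : ℝ} (hδ : 0 < δ) (hx : 0 ≤ x) :
    x ^ 2 ≤ 2 / δ ^ 2 * exp (δ * x) := by
  have h := pow_div_factorial_le_exp _ (mul_nonneg hδ.le hx) 2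
  rw [div_mul_eq_mul_div, le_div_iff₀ (by positivity)]
  norm_num [Nat.factorial] at h
  nlinarith

lemma sq_one_add_mul_exp_neg_le {δ t s : ℝ} (hδ : 0 < δ) (ht : 0 ≤ t) :
    (1 + t) ^ 2 * exp (-(2 * δ * (t - s))) ≤ 2 * exp (δ + 2 * δ * s) / δ ^ 2 * exp (-δ * t) := by
  calc _ ≤ 2 / δ ^ 2 * exp (δ * (1 + t)) * exp (-(2 * δ * (t - s))) := by
        gcongr
        exact sq_le_mul_exp hδ (by linarith)
    _ = 2 / δ ^ 2 * exp ((δ + 2 * δ * s) + -δ * t) := by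
        rw [mul_assoc, ← exp_add]
        ring_nf
    _ = _ := by
        rw [exp_add]
        ring

lemma setIntegral_le_mul_integral {α : Type*} [MeasurableSpace α] {μ : Measure α}
    {f g : α → ℝ} {s : Set α} {c : ℝ} (hs : MeasurableSet s) (hf : ∀ x, 0 ≤ f x)
    (hg : Integrable g μ) (hg₀ : ∀ x, 0 ≤ g x) (hc : 0 ≤ c) (hfg : ∀ x ∈ s, f x ≤ c * g x) :
    ∫ x in s, f x ∂μ ≤ c * ∫ x, g x ∂μ := by
  calc ∫ x in s, f x ∂μ ≤ ∫ x in s, c * g x ∂μ :=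
        integral_mono_of_nonneg (ae_of_all _ hf) (hg.const_mul c).restrict
          ((ae_restrict_iff' hs).2 (ae_of_all _ hfg))
    _ = c * ∫ x in s, g x ∂μ := integral_const_mul c _
    _ ≤ c * ∫ x, g x ∂μ :=
        mul_le_mul_of_nonneg_left (setIntegral_le_integral hg (ae_of_all _ hg₀)) hc

theorem stmt16_general (n : ℕ) (μ δ : ℝ) (hμ : 2 < μ) (hδ : 0 < δ)
    (hroot : μ * Real.log (1 + δ) = 2 * δ)
    (u₀ u₁ : EuclideanSpace ℝ (Fin n) → ℂ) :
    let b : ℝ → ℝ := fun r => Real.sqrt (r ^ 2 - μ ^ 2 / 4 * Real.log (1 + r) ^ 2)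
    let w : ℝ → EuclideanSpace ℝ (Fin n) → ℂ := fun t ξ =>
      (((1 + ‖ξ‖) ^ (-(μ * t) / 2) : ℝ) : ℂ) *
        (((Real.cos (b ‖ξ‖ * t) : ℝ) : ℂ) * fourierTransformCLM' u₀ ξ +
         ((μ * Real.log (1 + ‖ξ‖) / (2 * b ‖ξ‖) : ℝ) : ℂ) *
           ((Real.sin (b ‖ξ‖ * t) : ℝ) : ℂ) * fourierTransformCLM' u₀ ξ +
         ((1 / b ‖ξ‖ : ℝ) : ℂ) * ((Real.sin (b ‖ξ‖ * t) : ℝ) : ℂ) *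
           fourierTransformCLM' u₁ ξ)
    ∃ C β t₀ : ℝ, 0 < C ∧ 0 < β ∧ 0 < t₀ ∧ ∀ t : ℝ, t₀ ≤ t →
      (∫ ξ in {ξ : EuclideanSpace ℝ (Fin n) | δ < ‖ξ‖}, ‖w t ξ‖ ^ 2) ≤
        C * ((∫ x, ‖u₀ x‖) ^ 2 + (∫ x, ‖u₁ x‖) ^ 2) * Real.exp (-β * t) := by
  intro b w
  set A := ∫ x, ‖u₀ x‖
  set B := ∫ x, ‖u₁ x‖
  have hμ₀ : 0 < μ := by linarith
  set t₀ : ℝ := (n + 3) / μ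
  set I := ∫ ξ : EuclideanSpace ℝ (Fin n), (1 + ‖ξ‖) ^ (-((n : ℝ) + 1))
  have hI : Integrable fun ξ : EuclideanSpace ℝ (Fin n) => (1 + ‖ξ‖) ^ (-((n : ℝ) + 1)) :=
    integrable_one_add_norm (by simp)
  have hI₀ : 0 ≤ I := integral_nonneg fun _ => by positivity
  refine ⟨(1 + μ) ^ 2 * (2 * exp (δ + 2 * δ * t₀) / δ ^ 2) * 2 * (I + 1), δ, t₀,
    by positivity, hδ, by positivity, fun t ht => ?_⟩
  have ht₀ : 0 ≤ t := (by positivity : 0 ≤ t₀).trans ht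
  have hw : ∀ ξ ∈ {ξ : EuclideanSpace ℝ (Fin n) | δ < ‖ξ‖}, ‖w t ξ‖ ^ 2 ≤
      ((1 + μ) * (1 + t) * (A + B)) ^ 2 * exp (-(2 * δ * (t - t₀))) *
        (1 + ‖ξ‖) ^ (-((n : ℝ) + 1)) := by
    intro ξ hξ
    have hsplit : (1 + ‖ξ‖) ^ (2 - μ * t) =
        (1 + ‖ξ‖) ^ (-(μ * (t - t₀))) * (1 + ‖ξ‖) ^ (-((n : ℝ) + 1)) := by
      rw [← rpow_add (by positivity)]
      congr 1
      linear_combination (div_mul_cancel₀ ((n : ℝ) + 3) hμ₀.ne').symm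
    refine (norm_sq_damped_wave_le hμ₀.le ht₀ (norm_nonneg ξ) (sqrt_nonneg _)
      (norm_fourierTransformCLM'_le u₀ ξ) (norm_fourierTransformCLM'_le u₁ ξ)).trans ?_
    rw [hsplit, ← mul_assoc]
    gcongr
    exact one_add_rpow_neg_mul_le_exp hδ hroot hξ.le (mul_nonneg hμ₀.le (sub_nonneg.2 ht))
  have hA : 0 ≤ A := integral_nonneg fun _ => norm_nonneg _
  have hB : 0 ≤ B := integral_nonneg fun _ => norm_nonneg _
  calc _ ≤ ((1 + μ) * (1 + t) * (A + B)) ^ 2 * exp (-(2 * δ * (t - t₀))) * I :=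
        setIntegral_le_mul_integral (measurableSet_lt measurable_const measurable_norm)
          (fun _ => by positivity) hI (fun _ => by positivity) (by positivity) hw
    _ = (1 + μ) ^ 2 * ((1 + t) ^ 2 * exp (-(2 * δ * (t - t₀)))) * (A + B) ^ 2 * I := by ring
    _ ≤ (1 + μ) ^ 2 * (2 * exp (δ + 2 * δ * t₀) / δ ^ 2 * exp (-δ * t)) *
          (2 * (A ^ 2 + B ^ 2)) * (I + 1) := by
        gcongr (1 + μ) ^ 2 * ?_ * ?_ * ?_
        · exact sq_one_add_mul_exp_neg_le hδ ht₀
        · nlinarith [sq_nonneg (A - B)]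
        · linarith
    _ = _ := by ring

/-- Lemma 3.3 (high frequency estimate, `μ > 2`): for `u₀, u₁ ∈ L¹`,
`∫_{|ξ|>δ} |w(t,ξ)|² dξ ≤ C(‖u₀‖₁² + ‖u₁‖₁²) e^{-βt}` for large `t`. -/
theorem stmt16 (n : ℕ) (hn : 1 ≤ n) (μ δ : ℝ) (hμ : 2 < μ) (hδ : 0 < δ)
    (hroot : μ * Real.log (1 + δ) = 2 * δ)
    (u₀ u₁ : EuclideanSpace ℝ (Fin n) → ℂ)
    (hu₀ : Integrable u₀) (hu₁ : Integrable u₁) :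
    let b : ℝ → ℝ := fun r => Real.sqrt (r ^ 2 - μ ^ 2 / 4 * Real.log (1 + r) ^ 2)
    let w : ℝ → EuclideanSpace ℝ (Fin n) → ℂ := fun t ξ =>
      (((1 + ‖ξ‖) ^ (-(μ * t) / 2) : ℝ) : ℂ) *
        (((Real.cos (b ‖ξ‖ * t) : ℝ) : ℂ) * fourierTransformCLM' u₀ ξ +
         ((μ * Real.log (1 + ‖ξ‖) / (2 * b ‖ξ‖) : ℝ) : ℂ) *
           ((Real.sin (b ‖ξ‖ * t) : ℝ) : ℂ) * fourierTransformCLM' u₀ ξ +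
         ((1 / b ‖ξ‖ : ℝ) : ℂ) * ((Real.sin (b ‖ξ‖ * t) : ℝ) : ℂ) *
           fourierTransformCLM' u₁ ξ)
    ∃ C β t₀ : ℝ, 0 < C ∧ 0 < β ∧ 0 < t₀ ∧ ∀ t : ℝ, t₀ ≤ t →
      (∫ ξ in {ξ : EuclideanSpace ℝ (Fin n) | δ < ‖ξ‖}, ‖w t ξ‖ ^ 2) ≤
        C * ((∫ x, ‖u₀ x‖) ^ 2 + (∫ x, ‖u₁ x‖) ^ 2) * Real.exp (-β * t) :=
  stmt16_general n μ δ hμ hδ hroot u₀ u₁
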